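/- Let M, N be pointwise finite dimensional persistence vector spaces over ℝⁿ. Then d_match(ρ_M, ρ_N) ≤ d_I(M, N), where d_match(ρ_M, ρ_N) = sup_L m* · d_B(B(M_L), B(N_L)), the supremum being over all lines L: u = s·m⃗ + b with min_i m_i = m* > 0, max_i m_i = 1, Σ_i b_i = 0. -/

import Mathlib

open scoped ENNReal

universe u v

/-- An `n`-dimensional persistence vector space over the field `F`:
a family of `F`-vector spaces indexed by `ℝⁿ` (with the componentwise order)
together with functorial transition maps. -/
structure PersMod (n : ℕ) (F : Type u) [Field F] : Type (max (v + 1) u) where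
  space : (Fin n → ℝ) → Type v
  [isAddCommGroup : ∀ p, AddCommGroup (space p)]
  [isModule : ∀ p, Module F (space p)]
  trans : ∀ p q : Fin n → ℝ, p ≤ q → space p →ₗ[F] space q
  trans_self : ∀ (p : Fin n → ℝ) (h : p ≤ p), trans p p h = LinearMap.id
  trans_comp : ∀ (p q r : Fin n → ℝ) (hpq : p ≤ q) (hqr : q ≤ r),
    (trans q r hqr).comp (trans p q hpq) = trans p r (le_trans hpq hqr)

attribute [instance] PersMod.isAddCommGroup PersMod.isModule

/-- A 1-dimensional persistence vector space over `F`, indexed by `ℝ`. -/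
structure PersMod1 (F : Type u) [Field F] : Type (max (v + 1) u) where
  space : ℝ → Type v
  [isAddCommGroup : ∀ s, AddCommGroup (space s)]
  [isModule : ∀ s, Module F (space s)]
  trans : ∀ s t : ℝ, s ≤ t → space s →ₗ[F] space t
  trans_self : ∀ (s : ℝ) (h : s ≤ s), trans s s h = LinearMap.id
  trans_comp : ∀ (s t r : ℝ) (hst : s ≤ t) (htr : t ≤ r),
    (trans t r htr).comp (trans s t hst) = trans s r (le_trans hst htr)

attribute [instance] PersMod1.isAddCommGroup PersMod1.isModule

variable {n : ℕ} {F : Type u} [Field F]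

lemma shift_mono {p q : Fin n → ℝ} (ε : ℝ) (h : p ≤ q) :
    (p + fun _ => ε) ≤ (q + fun _ => ε) := by
  intro i
  simpa using h i

lemma le_shift2 {p : Fin n → ℝ} {ε : ℝ} (hε : 0 ≤ ε) :
    p ≤ (p + fun _ => ε) + fun _ => ε := by
  intro i
  show p i ≤ p i + ε + ε
  linarith

/-- An `ε`-interleaving between two `n`-dimensional persistence vector spaces. -/
structure Interleaving {n : ℕ} {F : Type u} [Field F] (M N : PersMod n F) (ε : ℝ) where
  hε : 0 ≤ ε
  α : ∀ p, M.space p →ₗ[F] N.space (p + fun _ => ε)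
  β : ∀ p, N.space p →ₗ[F] M.space (p + fun _ => ε)
  α_nat : ∀ p q (h : p ≤ q),
    (α q).comp (M.trans p q h) = (N.trans _ _ (shift_mono ε h)).comp (α p)
  β_nat : ∀ p q (h : p ≤ q),
    (β q).comp (N.trans p q h) = (M.trans _ _ (shift_mono ε h)).comp (β p)
  βα : ∀ p, (β (p + fun _ => ε)).comp (α p) =
    M.trans p ((p + fun _ => ε) + fun _ => ε) (le_shift2 hε)
  αβ : ∀ p, (α (p + fun _ => ε)).comp (β p) =
    N.trans p ((p + fun _ => ε) + fun _ => ε) (le_shift2 hε)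

/-- An `ε`-interleaving between two 1-dimensional persistence vector spaces. -/
structure Interleaving1 {F : Type u} [Field F] (M N : PersMod1 F) (ε : ℝ) where
  hε : 0 ≤ ε
  α : ∀ s, M.space s →ₗ[F] N.space (s + ε)
  β : ∀ s, N.space s →ₗ[F] M.space (s + ε)
  α_nat : ∀ s t (h : s ≤ t),
    (α t).comp (M.trans s t h) = (N.trans (s + ε) (t + ε) (by linarith)).comp (α s)
  β_nat : ∀ s t (h : s ≤ t),
    (β t).comp (N.trans s t h) = (M.trans (s + ε) (t + ε) (by linarith)).comp (β s)
  βα : ∀ s, (β (s + ε)).comp (α s) = M.trans s (s + ε + ε) (by linarith)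
  αβ : ∀ s, (α (s + ε)).comp (β s) = N.trans s (s + ε + ε) (by linarith)

/-- The interleaving distance on `n`-dimensional persistence vector spaces. -/
noncomputable def dI (M N : PersMod n F) : ℝ≥0∞ :=
  sInf {x : ℝ≥0∞ | ∃ ε : ℝ, 0 ≤ ε ∧ x = ENNReal.ofReal ε ∧ Nonempty (Interleaving M N ε)}

/-- The interleaving distance on 1-dimensional persistence vector spaces. -/
noncomputable def dI1 (M N : PersMod1.{u, v} F) : ℝ≥0∞ :=
  sInf {x : ℝ≥0∞ | ∃ ε : ℝ, 0 ≤ ε ∧ x = ENNReal.ofReal ε ∧ Nonempty (Interleaving1 M N ε)}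

lemma line_mono (m b : Fin n → ℝ) (hm : ∀ i, 0 ≤ m i) {s t : ℝ} (h : s ≤ t) :
    s • m + b ≤ t • m + b := by
  intro i
  simp only [Pi.add_apply, Pi.smul_apply, smul_eq_mul]
  nlinarith [hm i]

/-- The restriction `M_L` of a persistence vector space `M` to the line
`L : u = s • m + b` (with positive direction vector `m`). -/
noncomputable def PersMod.restrict (M : PersMod n F) (m b : Fin n → ℝ)
    (hm : ∀ i, 0 < m i) : PersMod1.{u, v} F where
  space s := M.space (s • m + b)
  trans s t h := M.trans _ _ (line_mono m b (fun i => (hm i).le) h)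
  trans_self _ _ := M.trans_self _ _
  trans_comp _ _ _ _ _ := M.trans_comp _ _ _ _ _

lemma key_le (m b : Fin n → ℝ) (hm : ∀ i, 0 < m i) (ι : Fin n) (hι : ∀ i, m ι ≤ m i)
    {ε : ℝ} (hε : 0 ≤ ε) (s : ℝ) :
    (s • m + b) + (fun _ => ε) ≤ (s + ε / m ι) • m + b := by
  intro i
  simp only [Pi.add_apply, Pi.smul_apply, smul_eq_mul]
  have h1 : ε / m ι * m ι = ε := div_mul_cancel₀ ε (hm ι).ne'
  have h2 : 0 ≤ ε / m ι := div_nonneg hε (hm ι).le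
  nlinarith [hι i]

lemma key_le' (m b : Fin n → ℝ) (hm : ∀ i, 0 < m i) (ι : Fin n) (hι : ∀ i, m ι ≤ m i)
    {ε : ℝ} (hε : 0 ≤ ε) (s : ℝ) :
    s • m + b ≤ ((s + ε / m ι) • m + b) - fun _ => ε := by
  intro i
  simp only [Pi.sub_apply, Pi.add_apply, Pi.smul_apply, smul_eq_mul]
  have h1 : ε / m ι * m ι = ε := div_mul_cancel₀ ε (hm ι).ne'
  have h2 : 0 ≤ ε / m ι := div_nonneg hε (hm ι).le
  nlinarith [hι i]

lemma shift_cancel (p : Fin n → ℝ) (ε : ℝ) : (p - fun _ => ε) + (fun _ => ε) = p := by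
  funext i
  simp

lemma PersMod.trans_trans_apply (M : PersMod n F) {p q r : Fin n → ℝ} (hpq : p ≤ q)
    (hqr : q ≤ r) (x : M.space p) :
    M.trans q r hqr (M.trans p q hpq x) = M.trans p r (hpq.trans hqr) x :=
  LinearMap.congr_fun (M.trans_comp p q r hpq hqr) x

lemma line_add_const_le_line_add {ε δ : ℝ} {m b : Fin n → ℝ} (hεδ : ∀ i, ε ≤ δ * m i)
    (s : ℝ) :
    (s • m + b) + (fun _ => ε) ≤ (s + δ) • m + b := by
  intro i
  simp only [Pi.add_apply, Pi.smul_apply, smul_eq_mul]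
  linarith [hεδ i, add_mul s δ (m i)]

namespace Interleaving

variable {M N : PersMod n F} {ε : ℝ} (I : Interleaving M N ε)

lemma α_nat_apply {p q : Fin n → ℝ} (h : p ≤ q) (x : M.space p) :
    I.α q (M.trans p q h x) = N.trans _ _ (shift_mono ε h) (I.α p x) :=
  LinearMap.congr_fun (I.α_nat p q h) x

lemma β_nat_apply {p q : Fin n → ℝ} (h : p ≤ q) (x : N.space p) :
    I.β q (N.trans p q h x) = M.trans _ _ (shift_mono ε h) (I.β p x) :=
  LinearMap.congr_fun (I.β_nat p q h) x

lemma βα_apply (p : Fin n → ℝ) (x : M.space p) :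
    I.β _ (I.α p x) = M.trans p _ (le_shift2 I.hε) x :=
  LinearMap.congr_fun (I.βα p) x

lemma αβ_apply (p : Fin n → ℝ) (x : N.space p) :
    I.α _ (I.β p x) = N.trans p _ (le_shift2 I.hε) x :=
  LinearMap.congr_fun (I.αβ p) x

/-- Since a diagonal shift by `ε` stays below the line shifted by `δ` in its parameter, the
interleaving maps followed by transition maps interleave the restrictions. -/
noncomputable def restrict (m b : Fin n → ℝ) (hm : ∀ i, 0 < m i) {δ : ℝ} (hδ : 0 ≤ δ)
    (hεδ : ∀ i, ε ≤ δ * m i) :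
    Interleaving1 (M.restrict m b hm) (N.restrict m b hm) δ where
  hε := hδ
  α s := (N.trans _ _ (line_add_const_le_line_add hεδ s)).comp (I.α (s • m + b))
  β s := (M.trans _ _ (line_add_const_le_line_add hεδ s)).comp (I.β (s • m + b))
  α_nat s _ _ := by
    refine LinearMap.ext fun (x : M.space (s • m + b)) => ?_
    show N.trans _ _ _ (I.α _ (M.trans _ _ _ x)) = N.trans _ _ _ (N.trans _ _ _ (I.α _ x))
    rw [I.α_nat_apply, N.trans_trans_apply, N.trans_trans_apply]
  β_nat s _ _ := by
    refine LinearMap.ext fun (x : N.space (s • m + b)) => ?_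
    show M.trans _ _ _ (I.β _ (N.trans _ _ _ x)) = M.trans _ _ _ (M.trans _ _ _ (I.β _ x))
    rw [I.β_nat_apply, M.trans_trans_apply, M.trans_trans_apply]
  βα s := by
    refine LinearMap.ext fun (x : M.space (s • m + b)) => ?_
    show M.trans _ _ _ (I.β _ (N.trans _ _ (line_add_const_le_line_add hεδ s) (I.α _ x)))
        = M.trans _ _ _ x
    rw [I.β_nat_apply, I.βα_apply, M.trans_trans_apply, M.trans_trans_apply]
  αβ s := by
    refine LinearMap.ext fun (x : N.space (s • m + b)) => ?_
    show N.trans _ _ _ (I.α _ (M.trans _ _ (line_add_const_le_line_add hεδ s) (I.β _ x)))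
        = N.trans _ _ _ x
    rw [I.α_nat_apply, I.αβ_apply, N.trans_trans_apply, N.trans_trans_apply]

end Interleaving

lemma dI1_restrict_le_of_interleaving {M N : PersMod n F} {ε : ℝ} (I : Interleaving M N ε)
    (m b : Fin n → ℝ) (hm : ∀ i, 0 < m i) {ι : Fin n} (hι : ∀ i, m ι ≤ m i) :
    dI1 (M.restrict m b hm) (N.restrict m b hm) ≤ ENNReal.ofReal (ε / m ι) := by
  have hδ : 0 ≤ ε / m ι := div_nonneg I.hε (hm ι).le
  have hεδ : ∀ i, ε ≤ ε / m ι * m i := fun i =>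
    calc ε = ε / m ι * m ι := (div_mul_cancel₀ ε (hm ι).ne').symm
      _ ≤ ε / m ι * m i := mul_le_mul_of_nonneg_left (hι i) hδ
  exact sInf_le ⟨ε / m ι, hδ, rfl, ⟨I.restrict m b hm hδ hεδ⟩⟩

lemma ofReal_mul_dI1_restrict_le_dI (M N : PersMod n F) (m b : Fin n → ℝ)
    (hm : ∀ i, 0 < m i) {ι : Fin n} (hι : ∀ i, m ι ≤ m i) :
    ENNReal.ofReal (m ι) * dI1 (M.restrict m b hm) (N.restrict m b hm) ≤ dI M N := by
  refine le_sInf ?_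
  rintro _ ⟨ε, -, rfl, ⟨I⟩⟩
  calc ENNReal.ofReal (m ι) * dI1 (M.restrict m b hm) (N.restrict m b hm)
      ≤ ENNReal.ofReal (m ι) * ENNReal.ofReal (ε / m ι) := by
        gcongr
        exact dI1_restrict_le_of_interleaving I m b hm hι
    _ = ENNReal.ofReal ε := by
        rw [← ENNReal.ofReal_mul (hm ι).le, mul_div_cancel₀ ε (hm ι).ne']

/-- `dB` stands for `M' ↦ N' ↦ d_B(B(M'), B(N'))`, and `stab` is the Algebraic Stability
Theorem for it. -/
theorem stmt_10 (M N : PersMod.{u, v} n F)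
    (hM : ∀ p, FiniteDimensional F (M.space p))
    (hN : ∀ p, FiniteDimensional F (N.space p))
    (dB : PersMod1.{u, v} F → PersMod1.{u, v} F → ℝ≥0∞)
    (stab : ∀ M' N' : PersMod1.{u, v} F, (∀ s, FiniteDimensional F (M'.space s)) →
      (∀ s, FiniteDimensional F (N'.space s)) → dB M' N' ≤ dI1 M' N') :
    sSup {x : ℝ≥0∞ | ∃ m b : Fin n → ℝ, ∃ hm : ∀ i, 0 < m i, ∃ ι : Fin n,
        (∀ i, m ι ≤ m i) ∧ (∃ i, m i = 1) ∧ (∀ i, m i ≤ 1) ∧ (∑ i, b i = 0) ∧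
        x = ENNReal.ofReal (m ι) * dB (M.restrict m b hm) (N.restrict m b hm)}
      ≤ dI M N := by
  refine sSup_le ?_
  rintro _ ⟨m, b, hm, ι, hι, -, -, -, rfl⟩
  calc ENNReal.ofReal (m ι) * dB (M.restrict m b hm) (N.restrict m b hm)
      ≤ ENNReal.ofReal (m ι) * dI1 (M.restrict m b hm) (N.restrict m b hm) := by
        gcongr
        exact stab _ _ (fun _ => hM _) (fun _ => hN _)
    _ ≤ dI M N := ofReal_mul_dI1_restrict_le_dI M N m b hm hι
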